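/- arXiv:1504.03302 — 2 statements merged into one kernel-verified Lean document; each statement's English description precedes it below -/
import Mathlib

section
/- Let G be a finite simple graph. If γ is an X-chain of G with an odd number of induced edges (π(γ) = −1), then Σ_{ξ⊆V(G)} (−1)^{|E(G[ξ])|} = 0, i.e., exactly half of the subsets of V(G) induce a subgraph with an odd number of edges. -/
open scoped symmDiff

instance symmDiffComm (V : Type*) [DecidableEq V] :
    Std.Commutative (α := Finset V) (· ∆ ·) := ⟨fun a b => symmDiff_comm a b⟩
instance symmDiffAssoc (V : Type*) [DecidableEq V] :
    Std.Associative (α := Finset V) (· ∆ ·) := ⟨symmDiff_assoc⟩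

/-- The correlation index of a vertex subset `ξ`: the symmetric difference of the
neighborhoods of the vertices of `ξ`. -/
def corr {V : Type*} [DecidableEq V] [Fintype V] (G : SimpleGraph V)
    [DecidableRel G.Adj] (ξ : Finset V) : Finset V :=
  ξ.fold (· ∆ ·) ∅ (fun v => G.neighborFinset v)

/-- The edges of `G` with both endpoints in `ξ`, i.e. the edges of the induced
subgraph `G[ξ]`. -/
def edgesIn {V : Type*} [DecidableEq V] [Fintype V] (G : SimpleGraph V)
    [DecidableRel G.Adj] (ξ : Finset V) : Finset (Sym2 V) :=
  G.edgeFinset.filter (fun e => ∀ v ∈ e, v ∈ ξ)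

/-- The stabilizer parity `π(ξ) = (−1)^{|E(G[ξ])|}`. -/
def stabParity {V : Type*} [DecidableEq V] [Fintype V] (G : SimpleGraph V)
    [DecidableRel G.Adj] (ξ : Finset V) : ℤ :=
  (-1 : ℤ) ^ (edgesIn G ξ).card

/-- The number of ordered adjacent pairs `(a, b)` with `a ∈ ξ₁` and `b ∈ ξ₂`;
modulo 2 this is the edge count `|E(ξ₁:ξ₂)|` between `ξ₁` and `ξ₂`. -/
def edgesBetween {V : Type*} [DecidableEq V] [Fintype V] (G : SimpleGraph V)
    [DecidableRel G.Adj] (ξ₁ ξ₂ : Finset V) : ℕ :=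
  ((ξ₁ ×ˢ ξ₂).filter (fun p => G.Adj p.1 p.2)).card
section Aux
variable {V : Type*} [DecidableEq V] [Fintype V] (G : SimpleGraph V) [DecidableRel G.Adj]

lemma edgesBetween_comm (s t : Finset V) : edgesBetween G s t = edgesBetween G t s := by
  unfold edgesBetween
  apply Finset.card_bij' (fun p _ => Prod.swap p) (fun p _ => Prod.swap p)
  · rintro ⟨a, b⟩ h
    simp only [Finset.mem_filter, Finset.mem_product] at h ⊢
    exact ⟨⟨h.1.2, h.1.1⟩, h.2.symm⟩
  · rintro ⟨a, b⟩ h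
    simp only [Finset.mem_filter, Finset.mem_product] at h ⊢
    exact ⟨⟨h.1.2, h.1.1⟩, h.2.symm⟩
  · rintro ⟨a, b⟩ _; rfl
  · rintro ⟨a, b⟩ _; rfl

lemma edgesBetween_union_left (s t u : Finset V) (h : Disjoint s t) :
    edgesBetween G (s ∪ t) u = edgesBetween G s u + edgesBetween G t u := by
  unfold edgesBetween
  rw [Finset.union_product, Finset.filter_union, Finset.card_union_of_disjoint]
  apply Finset.disjoint_filter_filter
  rw [Finset.disjoint_left]
  rintro ⟨a, b⟩ ha hb
  rw [Finset.mem_product] at ha hb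
  exact (Finset.disjoint_left.mp h) ha.1 hb.1

lemma edgesBetween_union_right (s t u : Finset V) (h : Disjoint t u) :
    edgesBetween G s (t ∪ u) = edgesBetween G s t + edgesBetween G s u := by
  rw [edgesBetween_comm, edgesBetween_union_left G t u s h, edgesBetween_comm G t s,
    edgesBetween_comm G u s]

lemma edgesBetween_eq_sum (s t : Finset V) :
    edgesBetween G s t = ∑ a ∈ s, (t.filter (G.Adj a)).card := by
  unfold edgesBetween
  rw [Finset.card_filter, Finset.sum_product]
  exact Finset.sum_congr rfl fun a _ => (Finset.card_filter _ _).symm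

lemma mem_corr_iff (ξ : Finset V) (v : V) :
    v ∈ corr G ξ ↔ Odd ((ξ.filter (fun w => G.Adj v w)).card) := by
  classical
  induction ξ using Finset.induction_on with
  | empty => simp [corr]
  | @insert a ξ ha ih =>
    have hfold : corr G (insert a ξ) = G.neighborFinset a ∆ corr G ξ := by
      unfold corr
      rw [Finset.fold_insert ha]
    rw [hfold, Finset.mem_symmDiff, Finset.filter_insert]
    by_cases hv : G.Adj v a
    · have hmem : v ∈ G.neighborFinset a := by
        rw [SimpleGraph.mem_neighborFinset]; exact hv.symm
      have hni : a ∉ ξ.filter (fun w => G.Adj v w) := fun hc => ha (Finset.mem_filter.mp hc).1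
      simp only [hv, if_pos, hmem, Finset.card_insert_of_notMem hni, ih,
        Nat.odd_add_one, not_not]
      tauto
    · have hmem : v ∉ G.neighborFinset a := by
        rw [SimpleGraph.mem_neighborFinset]; exact fun hc => hv hc.symm
      simp only [hv, if_neg, hmem, ih, not_false_iff]
      tauto

lemma even_filter_of_corr_empty {γ : Finset V} (hγ : corr G γ = ∅) (v : V) :
    Even ((γ.filter (fun w => G.Adj v w)).card) := by
  have h := mem_corr_iff G γ v
  rw [hγ] at h
  simp only [Finset.notMem_empty, false_iff] at h
  exact Nat.not_odd_iff_even.mp h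

lemma even_edgesBetween {γ : Finset V} (hγ : corr G γ = ∅) (ξ : Finset V) :
    Even (edgesBetween G ξ γ) := by
  rw [edgesBetween_eq_sum]
  exact Finset.even_sum _ fun a _ => even_filter_of_corr_empty G hγ a

lemma two_mul_edgesIn (ξ : Finset V) : edgesBetween G ξ ξ = 2 * (edgesIn G ξ).card := by
  have hmem : ∀ p ∈ (ξ ×ˢ ξ).filter (fun p => G.Adj p.1 p.2),
      (Sym2.mk p.1 p.2) ∈ edgesIn G ξ := by
    rintro ⟨a, b⟩ hp
    simp only [Finset.mem_filter, Finset.mem_product] at hp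
    simp only [edgesIn, Finset.mem_filter, SimpleGraph.mem_edgeFinset,
      SimpleGraph.mem_edgeSet]
    refine ⟨hp.2, ?_⟩
    intro v hv
    rcases Sym2.mem_iff.mp hv with rfl | rfl
    · exact hp.1.1
    · exact hp.1.2
  have hfib : ∀ e ∈ edgesIn G ξ,
      (((ξ ×ˢ ξ).filter (fun p => G.Adj p.1 p.2)).filter
        (fun p : V × V => Sym2.mk p.1 p.2 = e)).card = 2 := by
    intro e he
    induction e with
    | _ a b =>
      simp only [edgesIn, Finset.mem_filter, SimpleGraph.mem_edgeFinset,
        SimpleGraph.mem_edgeSet] at he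
      obtain ⟨hadj, hin⟩ := he
      have haξ : a ∈ ξ := hin a (Sym2.mem_mk_left a b)
      have hbξ : b ∈ ξ := hin b (Sym2.mem_mk_right a b)
      have hne : a ≠ b := hadj.ne
      have hset : (((ξ ×ˢ ξ).filter (fun p => G.Adj p.1 p.2)).filter
          (fun p : V × V => Sym2.mk p.1 p.2 = s(a, b))) = {(a, b), (b, a)} := by
        ext ⟨x, y⟩
        simp only [Finset.mem_filter, Finset.mem_product, Finset.mem_insert,
          Finset.mem_singleton, Prod.mk.injEq, Sym2.eq_iff]
        constructor
        · rintro ⟨_, (⟨rfl, rfl⟩ | ⟨rfl, rfl⟩)⟩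
          · left; exact ⟨rfl, rfl⟩
          · right; exact ⟨rfl, rfl⟩
        · rintro (⟨rfl, rfl⟩ | ⟨rfl, rfl⟩)
          · simp [haξ, hbξ, hadj]
          · simp [haξ, hbξ, hadj.symm]
      rw [hset, Finset.card_insert_of_notMem (by simp [hne]), Finset.card_singleton]
  unfold edgesBetween
  rw [Finset.card_eq_sum_card_fiberwise (f := fun p : V × V => Sym2.mk p.1 p.2)
    (t := edgesIn G ξ) hmem, Finset.sum_congr rfl hfib, Finset.sum_const,
    smul_eq_mul, mul_comm]

lemma quad (A B C : Finset V) (hAB : Disjoint A B) (hAC : Disjoint A C)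
    (hBC : Disjoint B C) :
    edgesBetween G (A ∪ B) (A ∪ B) + 2 * edgesBetween G (A ∪ C) (B ∪ C)
      = edgesBetween G (A ∪ C) (A ∪ C) + edgesBetween G (B ∪ C) (B ∪ C)
        + 4 * edgesBetween G A B := by
  rw [edgesBetween_union_left G A B (A ∪ B) hAB,
    edgesBetween_union_left G A C (B ∪ C) hAC,
    edgesBetween_union_left G A C (A ∪ C) hAC,
    edgesBetween_union_left G B C (B ∪ C) hBC,
    edgesBetween_union_right G A A B hAB, edgesBetween_union_right G B A B hAB,
    edgesBetween_union_right G A B C hBC, edgesBetween_union_right G C B C hBC,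
    edgesBetween_union_right G A A C hAC, edgesBetween_union_right G C A C hAC,
    edgesBetween_union_right G B B C hBC,
    edgesBetween_comm G B A, edgesBetween_comm G C A, edgesBetween_comm G C B]
  ring

lemma edgesIn_step {γ : Finset V} (hγ : corr G γ = ∅) (ξ : Finset V) :
    (edgesIn G (ξ ∆ γ)).card % 2
      = ((edgesIn G ξ).card + (edgesIn G γ).card) % 2 := by
  have hAB : Disjoint (ξ \ γ) (γ \ ξ) := disjoint_sdiff_sdiff
  have hAC : Disjoint (ξ \ γ) (ξ ∩ γ) :=
    Finset.sdiff_disjoint.mono_right Finset.inter_subset_right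
  have hBC : Disjoint (γ \ ξ) (ξ ∩ γ) :=
    Finset.sdiff_disjoint.mono_right Finset.inter_subset_left
  have h := quad G (ξ \ γ) (γ \ ξ) (ξ ∩ γ) hAB hAC hBC
  have e1 : (ξ \ γ) ∪ (γ \ ξ) = ξ ∆ γ := by rw [symmDiff_def]; rfl
  have e2 : (ξ \ γ) ∪ (ξ ∩ γ) = ξ := Finset.sdiff_union_inter ξ γ
  have e3 : (γ \ ξ) ∪ (ξ ∩ γ) = γ := by
    rw [Finset.inter_comm]; exact Finset.sdiff_union_inter γ ξ
  rw [e1, e2, e3, two_mul_edgesIn, two_mul_edgesIn, two_mul_edgesIn] at h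
  obtain ⟨k, hk⟩ := even_edgesBetween G hγ ξ
  omega

end Aux

/-- If `G` has an X-chain with an odd number of induced edges, then the sum of the
stabilizer parities over all vertex subsets vanishes: exactly half of the subsets
induce a subgraph with an odd number of edges. -/
theorem parity_sum_zero_of_odd_xChain {V : Type*} [DecidableEq V] [Fintype V]
    (G : SimpleGraph V) [DecidableRel G.Adj] (γ : Finset V)
    (hγ : corr G γ = ∅) (hodd : Odd (edgesIn G γ).card) :
    (∑ ξ : Finset V, ((-1 : ℤ)) ^ (edgesIn G ξ).card) = 0 ∧
    2 * ((Finset.univ : Finset (Finset V)).filter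
        (fun ξ => Odd (edgesIn G ξ).card)).card = 2 ^ Fintype.card V := by
  classical
  have hγne : γ ≠ ∅ := by
    rintro rfl
    have hempty : edgesIn G (∅ : Finset V) = ∅ := by
      apply Finset.filter_false_of_mem
      intro e _
      induction e with
      | _ a b =>
        intro hc
        exact Finset.notMem_empty a (hc a (Sym2.mem_mk_left a b))
    rw [hempty] at hodd
    simp at hodd
  have hstep : ∀ ξ : Finset V,
      ((-1 : ℤ)) ^ (edgesIn G (ξ ∆ γ)).card = -((-1 : ℤ)) ^ (edgesIn G ξ).card := by
    intro ξ
    have h := edgesIn_step G hγ ξ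
    rw [Nat.odd_iff] at hodd
    rcases Nat.even_or_odd (edgesIn G ξ).card with he | ho
    · have hoδ : Odd (edgesIn G (ξ ∆ γ)).card := by
        rw [Nat.odd_iff]; rw [Nat.even_iff] at he; omega
      rw [hoδ.neg_one_pow, he.neg_one_pow]
    · have heδ : Even (edgesIn G (ξ ∆ γ)).card := by
        rw [Nat.even_iff]; rw [Nat.odd_iff] at ho; omega
      rw [heδ.neg_one_pow, ho.neg_one_pow]
      norm_num
  have hsum : (∑ ξ : Finset V, ((-1 : ℤ)) ^ (edgesIn G ξ).card) = 0 := by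
    apply Finset.sum_involution (g := fun ξ _ => ξ ∆ γ)
      (g_mem := fun ξ _ => Finset.mem_univ _)
    · intro ξ _
      rw [hstep ξ]
      ring
    · intro ξ _ _ hc
      exact hγne (by rwa [symmDiff_eq_left] at hc)
    · intro ξ _
      exact symmDiff_symmDiff_cancel_right γ ξ
  refine ⟨hsum, ?_⟩
  have h1 := Finset.sum_filter_add_sum_filter_not (Finset.univ : Finset (Finset V))
    (fun ξ => Odd (edgesIn G ξ).card) (fun ξ => ((-1 : ℤ)) ^ (edgesIn G ξ).card)
  have h2 : (∑ ξ ∈ (Finset.univ : Finset (Finset V)).filter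
      (fun ξ => Odd (edgesIn G ξ).card), ((-1 : ℤ)) ^ (edgesIn G ξ).card)
      = -(((Finset.univ : Finset (Finset V)).filter
          (fun ξ => Odd (edgesIn G ξ).card)).card : ℤ) := by
    rw [Finset.sum_congr rfl
      (fun ξ hξ => ((Finset.mem_filter.mp hξ).2).neg_one_pow), Finset.sum_const]
    simp
  have h3 : (∑ ξ ∈ (Finset.univ : Finset (Finset V)).filter
      (fun ξ => ¬ Odd (edgesIn G ξ).card), ((-1 : ℤ)) ^ (edgesIn G ξ).card)
      = (((Finset.univ : Finset (Finset V)).filter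
          (fun ξ => ¬ Odd (edgesIn G ξ).card)).card : ℤ) := by
    rw [Finset.sum_congr rfl
      (fun ξ hξ => (Nat.not_odd_iff_even.mp
        (Finset.mem_filter.mp hξ).2).neg_one_pow), Finset.sum_const]
    simp
  rw [hsum, h2, h3] at h1
  have h4 := Finset.card_filter_add_card_filter_not
    (s := (Finset.univ : Finset (Finset V))) (fun ξ => Odd (edgesIn G ξ).card)
  rw [Finset.card_univ, Fintype.card_finset] at h4
  have h5 : (((Finset.univ : Finset (Finset V)).filter
      (fun ξ => Odd (edgesIn G ξ).card)).card : ℤ)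
      = (((Finset.univ : Finset (Finset V)).filter
          (fun ξ => ¬ Odd (edgesIn G ξ).card)).card : ℤ) := by linarith
  have h6 : ((Finset.univ : Finset (Finset V)).filter
      (fun ξ => Odd (edgesIn G ξ).card)).card
      = ((Finset.univ : Finset (Finset V)).filter
          (fun ξ => ¬ Odd (edgesIn G ξ).card)).card := by exact_mod_cast h5
  omega
end

section
/- Let G be the star graph S_n on vertices {1,...,n} with center vertex 1 (edges {1,j} for j = 2,...,n), where n ≥ 3. Then a subset ξ ⊆ {1,...,n} is an X-chain of S_n if and only if 1 ∉ ξ and |ξ| is even. In particular, the X-chain group of S_n has order 2^{n−2}. -/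
open scoped Classical

lemma even_subsets_count (n : ℕ) (hn : 3 ≤ n) :
    ((Finset.univ : Finset (Finset (Fin n))).filter
      (fun ξ => (⟨0, Nat.lt_of_lt_of_le (by norm_num) hn⟩ : Fin n) ∉ ξ ∧ Even ξ.card)).card = 2 ^ (n - 2) := by
  set a : Fin n := ⟨0, by omega⟩
  set b : Fin n := ⟨1, by omega⟩
  have hab : a ≠ b := by simp [a, b, Fin.ext_iff]
  have hpow : (2 : ℕ) ^ (n - 2) = (((Finset.univ.erase a).erase b).powerset).card := by
    rw [Finset.card_powerset, Finset.card_erase_of_mem (by simp [Finset.mem_erase, hab.symm]),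
      Finset.card_erase_of_mem (by simp), Finset.card_univ, Fintype.card_fin]
    congr 1
  rw [hpow]
  refine Finset.card_bij' (fun ξ _ => ξ.erase b)
    (fun T _ => if Even T.card then T else insert b T) ?_ ?_ ?_ ?_
  · intro ξ hξ
    simp only [Finset.mem_filter, Finset.mem_univ, true_and] at hξ
    simp only [Finset.mem_powerset]
    intro x hx
    simp only [Finset.mem_erase] at hx ⊢
    exact ⟨hx.1, fun h => hξ.1 (h ▸ hx.2), Finset.mem_univ x⟩
  · intro T hT
    simp only [Finset.mem_powerset] at hT
    have hbT : b ∉ T := fun h => by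
      have := hT h; simp [Finset.mem_erase] at this
    have haT : a ∉ T := fun h => by
      have := hT h; simp [Finset.mem_erase, hab] at this
    simp only [Finset.mem_filter, Finset.mem_univ, true_and]
    by_cases h : Even T.card
    · simp [h, haT]
    · simp only [h, if_false]
      refine ⟨by simp [Finset.mem_insert, haT, hab], ?_⟩
      rw [Finset.card_insert_of_notMem hbT]
      exact (Nat.odd_iff.mpr (Nat.not_even_iff.mp h)).add_one
  · intro ξ hξ
    simp only [Finset.mem_filter, Finset.mem_univ, true_and] at hξ
    by_cases hb : b ∈ ξ
    · have h1 : 1 ≤ ξ.card := Finset.card_pos.mpr ⟨b, hb⟩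
      have : ¬ Even (ξ.erase b).card := by
        rw [Finset.card_erase_of_mem hb, Nat.not_even_iff]
        obtain ⟨k, hk⟩ := hξ.2
        omega
      simp [this, Finset.insert_erase hb]
    · simp [Finset.erase_eq_of_notMem hb, hξ.2]
  · intro T hT
    simp only [Finset.mem_powerset] at hT
    have hbT : b ∉ T := fun h => by
      have := hT h; simp [Finset.mem_erase] at this
    by_cases h : Even T.card
    · simp [h, Finset.erase_eq_of_notMem hbT]
    · simp [h, Finset.erase_insert hbT]

/-- For the star graph `S_n` (center `0`, `n ≥ 3`), a subset `ξ` is an X-chain iff the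
center is not in `ξ` and `|ξ|` is even; consequently there are `2^{n−2}` X-chains. -/
theorem star_graph_xChains (n : ℕ) (hn : 3 ≤ n) :
    (∀ ξ : Finset (Fin n),
      ((∀ v : Fin n,
          Even ((ξ.filter (fun u => (SimpleGraph.fromRel
            (fun a _ => a = (⟨0, by omega⟩ : Fin n))).Adj v u)).card)) ↔
        ((⟨0, by omega⟩ : Fin n) ∉ ξ ∧ Even ξ.card))) ∧
    ((Finset.univ : Finset (Finset (Fin n))).filter
        (fun ξ => ∀ v : Fin n,
          Even ((ξ.filter (fun u => (SimpleGraph.fromRel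
            (fun a _ => a = (⟨0, by omega⟩ : Fin n))).Adj v u)).card))).card
      = 2 ^ (n - 2) := by
  set a : Fin n := ⟨0, by omega⟩ with ha
  have key : ∀ ξ : Finset (Fin n),
      ((∀ v : Fin n,
          Even ((ξ.filter (fun u => (SimpleGraph.fromRel
            (fun a' _ => a' = a)).Adj v u)).card)) ↔
        (a ∉ ξ ∧ Even ξ.card)) := by
    intro ξ
    constructor
    · intro h
      set b : Fin n := ⟨1, by omega⟩
      have hab : b ≠ a := by simp [a, b, Fin.ext_iff]
      have hb := h b
      have hfb : ξ.filter (fun u => (SimpleGraph.fromRel (fun a' _ => a' = a)).Adj b u)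
          = ξ.filter (fun u => u = a) := by
        apply Finset.filter_congr
        intro u hu
        simp only [SimpleGraph.fromRel_adj]
        constructor
        · rintro ⟨hne, h1 | h1⟩
          · exact absurd h1 hab
          · exact h1
        · rintro rfl; exact ⟨hab, Or.inr rfl⟩
      rw [hfb] at hb
      have haξ : a ∉ ξ := by
        intro haξ
        rw [Finset.filter_eq'] at hb
        simp [haξ] at hb
      refine ⟨haξ, ?_⟩
      have h0 := h a
      have hf0 : ξ.filter (fun u => (SimpleGraph.fromRel (fun a' _ => a' = a)).Adj a u) = ξ := by
        apply Finset.filter_true_of_mem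
        intro u hu
        simp only [SimpleGraph.fromRel_adj]
        exact ⟨fun h' => haξ (h' ▸ hu), Or.inl trivial⟩
      rwa [hf0] at h0
    · rintro ⟨haξ, hev⟩ v
      by_cases hv : v = a
      · have hthis : ξ.filter (fun u => (SimpleGraph.fromRel (fun a' _ => a' = a)).Adj v u)
            = ξ := by
          apply Finset.filter_true_of_mem
          intro u hu
          simp only [SimpleGraph.fromRel_adj]
          refine ⟨fun h' => haξ ?_, Or.inl hv⟩
          rwa [← h', hv] at hu
        rw [hthis]; exact hev
      · have hthis : ξ.filter (fun u => (SimpleGraph.fromRel (fun a' _ => a' = a)).Adj v u)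
            = ∅ := by
          apply Finset.filter_false_of_mem
          intro u hu
          simp only [SimpleGraph.fromRel_adj]
          rintro ⟨hne, h1 | h1⟩
          · exact hv h1
          · exact haξ (h1 ▸ hu)
        rw [hthis]
        simp
  refine ⟨key, ?_⟩
  rw [Finset.filter_congr (fun ξ _ => by rw [key ξ])]
  exact even_subsets_count n hn
end
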